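/- Let β > 0 and let A ⊂ ℕ be any subset, with P_A : ℓ² → ℓ² the coordinate projection onto the components in A. Then the bounded operator D = β·Id + P_A K*K (i.e., (Df)|_A = β f|_A + (K*K f)|_A and (Df)|_{A^c} = β f|_{A^c}) is boundedly invertible, and ‖D^{-1}‖ ≤ β^{-1}(2 + β^{-1}‖K*K‖); in particular the bound is uniform over all subsets A. -/

import Mathlib

/-!
Split `ℓ²` along `P` and `Q = 1 - P`. Since `Q P = 0`, the operator `D = β + P T` satisfies
`Q D = β Q` and `P D = M P + P T Q` with `M = β + P T P`, so `D` is block lower-triangular.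
The compression `P T P` is positive, so `M` is coercive with constant `β` and `‖M⁻¹‖ ≤ β⁻¹`.
Back-substitution gives `D⁻¹ = β⁻¹ Q + M⁻¹ (P - β⁻¹ P T Q)`, and `‖P‖, ‖Q‖ ≤ 1` yields the bound.
-/

/-- `ℓ²(ℕ, ℝ)`. -/
abbrev ltwo : Type := lp (fun _ : ℕ => ℝ) 2

theorem IsIdempotentElem.exists_unit_smul_one_add_mul {𝕜 R : Type*} [Field 𝕜] [Ring R]
    [Algebra 𝕜 R] {p t : R} {β : 𝕜} (hp : IsIdempotentElem p) (hβ : β ≠ 0) (u : Rˣ)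
    (hu : (u : R) = β • 1 + p * t * p) :
    ∃ v : Rˣ, (v : R) = β • 1 + p * t ∧
      (↑v⁻¹ : R) = β⁻¹ • (1 - p) + ↑u⁻¹ * (p - β⁻¹ • (p * t * (1 - p))) := by
  have hpp (x : R) : p * (p * x) = p * x := by rw [← mul_assoc, hp.eq]
  set d := β • 1 + p * t with hd
  set y := p - β⁻¹ • (p * t * (1 - p)) with hy
  have hpy : p * y = y := by
    simp only [hy, mul_sub, mul_smul_comm, mul_assoc, hpp, hp.eq]
  have hdp : d * p = u * p := by
    simp only [hd, hu, add_mul, smul_mul_assoc, one_mul, mul_assoc, hp.eq]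
  have hcomm : Commute p ↑u⁻¹ := by
    refine Commute.units_inv_right ?_
    simp only [hu, Commute, SemiconjBy, mul_add, add_mul, mul_smul_comm, smul_mul_assoc, mul_one,
      one_mul, mul_assoc, hpp, hp.eq]
  have hyd : y * d = u * p := by
    simp only [hy, hd, hu, sub_mul, mul_sub, add_mul, mul_add, smul_mul_assoc, mul_smul_comm,
      smul_sub, mul_one, one_mul, mul_assoc, hpp, hp.eq, smul_smul, mul_inv_cancel₀ hβ, one_smul]
    abel
  have hdy : d * (↑u⁻¹ * y) = y := by
    calc d * (↑u⁻¹ * y) = d * (↑u⁻¹ * (p * y)) := by rw [hpy]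
      _ = d * p * (↑u⁻¹ * y) := by rw [← mul_assoc _ p, ← hcomm.eq, mul_assoc, mul_assoc]
      _ = y := by
        rw [hdp, mul_assoc, ← mul_assoc p, hcomm.eq, mul_assoc, u.mul_inv_cancel_left, hpy]
  refine ⟨⟨d, β⁻¹ • (1 - p) + ↑u⁻¹ * y, ?_, ?_⟩, rfl, rfl⟩
  · rw [mul_add, hdy, hy, hd]
    simp only [add_mul, mul_sub, smul_add, smul_sub, smul_mul_assoc, mul_smul_comm, mul_one,
      one_mul, mul_assoc, smul_smul, inv_mul_cancel₀ hβ, one_smul]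
    abel
  · rw [add_mul, mul_assoc, hyd, u.inv_mul_cancel_left, hd]
    simp only [sub_mul, mul_add, smul_mul_assoc, mul_smul_comm, smul_sub, mul_one, one_mul,
      hpp, smul_smul, mul_inv_cancel₀ hβ, one_smul]
    abel

namespace ContinuousLinearMap

open scoped RealInnerProductSpace

variable {E : Type*} [NormedAddCommGroup E] [InnerProductSpace ℝ E] [CompleteSpace E]

theorem IsPositive.exists_unit_smul_one_add {S : E →L[ℝ] E} (hS : S.IsPositive) {β : ℝ}
    (hβ : 0 < β) :
    ∃ u : (E →L[ℝ] E)ˣ, (u : E →L[ℝ] E) = β • 1 + S ∧ ‖(↑u⁻¹ : E →L[ℝ] E)‖ ≤ β⁻¹ := by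
  have hcoercive (x : E) : ‖x‖ ^ 2 * (⟨β, hβ.le⟩ : NNReal) ≤ ‖⟪(β • 1 + S) x, x⟫‖ := by
    change ‖x‖ ^ 2 * β ≤ _
    rw [add_apply, inner_add_left, smul_apply, one_apply_eq_self, real_inner_smul_left,
      real_inner_self_eq_norm_sq, mul_comm]
    exact (le_add_of_nonneg_right (hS.inner_nonneg_left x)).trans (Real.le_norm_self _)
  have hβ' : (0 : NNReal) < ⟨β, hβ.le⟩ := hβ
  obtain ⟨u, hu⟩ := isUnit_of_forall_le_norm_inner_map _ hβ' hcoercive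
  refine ⟨u, hu, opNorm_le_bound _ (inv_nonneg.2 hβ.le) fun y => ?_⟩
  have := (antilipschitz_of_forall_le_inner_map _ hβ' hcoercive).le_mul_dist
    ((↑u⁻¹ : E →L[ℝ] E) y) 0
  rwa [← hu, dist_zero_right, map_zero, dist_zero_right, ← mul_apply_eq_comp, u.mul_inv,
    one_apply_eq_self] at this

theorem _root_.IsStarProjection.exists_unit_smul_one_add_mul_of_isPositive {P T : E →L[ℝ] E}
    (hP : IsStarProjection P) (hT : T.IsPositive) {β : ℝ} (hβ : 0 < β) :
    ∃ v : (E →L[ℝ] E)ˣ, (v : E →L[ℝ] E) = β • 1 + P * T ∧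
      ‖(↑v⁻¹ : E →L[ℝ] E)‖ ≤ β⁻¹ * (2 + β⁻¹ * ‖T‖) := by
  have hPTP : (P * T * P).IsPositive := by
    have := hT.conj_adjoint P
    rwa [hP.isSelfAdjoint.adjoint_eq, ← mul_def, ← mul_def, ← mul_assoc] at this
  obtain ⟨u, hu, hu_norm⟩ := hPTP.exists_unit_smul_one_add hβ
  obtain ⟨v, hv, hv_inv⟩ := hP.isIdempotentElem.exists_unit_smul_one_add_mul hβ.ne' u hu
  refine ⟨v, hv, ?_⟩
  have hp : ‖P‖ ≤ 1 := hP.norm_le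
  have hq : ‖1 - P‖ ≤ 1 := hP.one_sub.norm_le
  have hβ0 : 0 ≤ β⁻¹ := inv_nonneg.2 hβ.le
  have hPTQ : ‖β⁻¹ • (P * T * (1 - P))‖ ≤ β⁻¹ * (‖P‖ * ‖T‖ * ‖1 - P‖) := by
    rw [norm_smul, Real.norm_of_nonneg hβ0]
    gcongr
    exact (norm_mul_le _ _).trans (by gcongr; exact norm_mul_le _ _)
  rw [hv_inv]
  calc _ ≤ ‖β⁻¹ • (1 - P)‖ + ‖(↑u⁻¹ : E →L[ℝ] E)‖ * ‖P - β⁻¹ • (P * T * (1 - P))‖ :=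
        (norm_add_le _ _).trans (by gcongr; exact norm_mul_le _ _)
    _ ≤ β⁻¹ * ‖1 - P‖ + ‖(↑u⁻¹ : E →L[ℝ] E)‖ * (‖P‖ + β⁻¹ * (‖P‖ * ‖T‖ * ‖1 - P‖)) := by
        rw [norm_smul, Real.norm_of_nonneg hβ0]
        gcongr
        exact (norm_sub_le _ _).trans (by gcongr)
    _ ≤ β⁻¹ * 1 + β⁻¹ * (1 + β⁻¹ * (1 * ‖T‖ * 1)) := by gcongr
    _ = β⁻¹ * (2 + β⁻¹ * ‖T‖) := by ring

end ContinuousLinearMap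

theorem lp.isStarProjection_of_mem_of_notMem {ι 𝕜 : Type*} [RCLike 𝕜] {G : ι → Type*}
    [∀ i, NormedAddCommGroup (G i)] [∀ i, InnerProductSpace 𝕜 (G i)] [∀ i, CompleteSpace (G i)]
    {A : Set ι} {P : lp G 2 →L[𝕜] lp G 2} (hmem : ∀ f, ∀ i ∈ A, P f i = f i)
    (hnotMem : ∀ f, ∀ i ∉ A, P f i = 0) : IsStarProjection P := by
  refine (isStarProjection_iff P).2 ⟨?_, ?_⟩
  · refine ContinuousLinearMap.ext fun f => lp.ext <| funext fun i => ?_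
    by_cases hi : i ∈ A
    · exact hmem _ i hi
    · exact (hnotMem _ i hi).trans (hnotMem _ i hi).symm
  · refine ContinuousLinearMap.isSelfAdjoint_iff_isSymmetric.2 fun f g => ?_
    simp only [ContinuousLinearMap.coe_coe, lp.inner_eq_tsum]
    congr 1 with i
    by_cases hi : i ∈ A
    · rw [hmem f i hi, hmem g i hi]
    · rw [hnotMem f i hi, hnotMem g i hi, inner_zero_left, inner_zero_right]

/-- For any subset `A ⊆ ℕ` and `β > 0`, the operator `D = β·Id + P_A K*K` (where `P_A`
is the coordinate projection onto the components in `A`) is boundedly invertible with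
`‖D⁻¹‖ ≤ β⁻¹(2 + β⁻¹‖K*K‖)`; in particular the bound is uniform in `A`. -/
theorem ssn_newton_matrix_invertible
    {H : Type*} [NormedAddCommGroup H] [InnerProductSpace ℝ H] [CompleteSpace H]
    (K : ltwo →L[ℝ] H) (β : ℝ) (hβ : 0 < β) (A : Set ℕ)
    (P : ltwo →L[ℝ] ltwo)
    (hPmem : ∀ (f : ltwo), ∀ i ∈ A, P f i = f i)
    (hPnotmem : ∀ (f : ltwo), ∀ i ∉ A, P f i = 0) :
    ∃ Dinv : ltwo →L[ℝ] ltwo,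
      Dinv.comp (β • ContinuousLinearMap.id ℝ ltwo +
          P.comp ((ContinuousLinearMap.adjoint K).comp K)) =
        ContinuousLinearMap.id ℝ ltwo ∧
      (β • ContinuousLinearMap.id ℝ ltwo +
          P.comp ((ContinuousLinearMap.adjoint K).comp K)).comp Dinv =
        ContinuousLinearMap.id ℝ ltwo ∧
      ‖Dinv‖ ≤ β⁻¹ * (2 + β⁻¹ * ‖(ContinuousLinearMap.adjoint K).comp K‖) := by
  have hP : IsStarProjection P := lp.isStarProjection_of_mem_of_notMem hPmem hPnotmem
  obtain ⟨v, hv, hv_norm⟩ := hP.exists_unit_smul_one_add_mul_of_isPositive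
    (ContinuousLinearMap.isPositive_adjoint_comp_self K) hβ
  have hD : β • ContinuousLinearMap.id ℝ ltwo + P.comp ((ContinuousLinearMap.adjoint K).comp K) =
      v := hv.symm
  refine ⟨↑v⁻¹, ?_, ?_, hv_norm⟩ <;> rw [hD]
  · exact v.inv_mul
  · exact v.mul_inv
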